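/- Let κ and λ be infinite cardinals with κ regular, and assume λ^{<κ} = λ ≥ 𝔠. Then for every positively totally ordered monoid S there is no continuous weak λ⁺-measure space (ᵏλ, 𝔐, μ) on the generalized Baire space ᵏλ with μ taking values in S. -/

import Mathlib

open Cardinal Set

noncomputable section

/-- The type of `ι`-indexed sequences in `A`, as a type synonym carrying the bounded topology. -/
def GSeq (ι A : Type) : Type := ι → A

/-- The bounded topology on `GSeq ι A`: the topology generated by the cones
`N_s = {y | ∀ i < b, y i = x i}`. -/
instance GSeq.topologicalSpace (ι A : Type) [LinearOrder ι] : TopologicalSpace (GSeq ι A) :=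
  TopologicalSpace.generateFrom
    {C : Set (GSeq ι A) | ∃ (x : ι → A) (b : ι), C = {y : GSeq ι A | ∀ i, i < b → y i = x i}}

/-- The weight of a topological space: the least cardinality of a basis for its topology. -/
def tweight (X : Type) [TopologicalSpace X] : Cardinal :=
  ⨅ B : {B : Set (Set X) // TopologicalSpace.IsTopologicalBasis B}, #↥(B.1)

/-- `S` is a positively totally ordered monoid (on top of given `AddMonoid` and `LinearOrder`
structures): the addition is weakly monotone in both arguments, `0` is the least element, and
the positive cone `S⁺ = {a | 0 < a}` is nonempty. -/
structure IsPTOM (S : Type*) [AddMonoid S] [LinearOrder S] : Prop where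
  add_le_add : ∀ a b c d : S, a ≤ b → c ≤ d → a + c ≤ b + d
  zero_le : ∀ a : S, 0 ≤ a
  exists_pos : ∃ a : S, 0 < a

/-- The sum of `f` over a finite set `F` of indices, taken in increasing order of the indices. -/
def finSum {ι : Type*} [LinearOrder ι] {S : Type*} [AddMonoid S] (f : ι → S) (F : Finset ι) : S :=
  ((F.sort (· ≤ ·)).map f).sum

/-- `μ` is a continuous measure: every singleton is measurable and has measure `0`. -/
def MeasureContinuous {X : Type} [TopologicalSpace X] {S : Type*} [Zero S]
    (M : Set (Set X)) (μ : Set X → S) : Prop :=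
  ∀ x : X, {x} ∈ M ∧ μ {x} = 0

/-- `(X, M, μ)` is a weak `λ⁺`-measure space (with `lam` playing the role of `λ`):
`M` contains all open sets and is closed under unions of at most `lam` many sets,
and `μ` satisfies the axioms (M1)-(M5). -/
structure IsWeakMeasureSpace (X : Type) [TopologicalSpace X] (lam : Cardinal)
    (S : Type*) [AddMonoid S] [LinearOrder S] (M : Set (Set X)) (μ : Set X → S) : Prop where
  open_mem : ∀ U : Set X, IsOpen U → U ∈ M
  sUnion_mem : ∀ 𝒜 : Set (Set X), 𝒜 ⊆ M → #↥𝒜 ≤ lam → ⋃₀ 𝒜 ∈ M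
  measure_empty : μ ∅ = 0
  measure_univ_pos : 0 < μ Set.univ
  mono : ∀ A B : Set X, A ∈ M → B ∈ M → A ⊆ B → μ A ≤ μ B
  additive : ∀ (γ : Ordinal) (A : γ.ToType → Set X), γ.card ≤ lam →
    (∀ i, A i ∈ M) → Pairwise (Function.onFun Disjoint A) →
    IsLUB {s : S | ∃ F : Finset γ.ToType, s = finSum (fun i => μ (A i)) F} (μ (⋃ i, A i))
  point_reg : ∀ (x : X) (γ : Ordinal) (A : γ.ToType → Set X),
    {x} ∈ M → γ.card ≤ lam →
    (∀ i, IsOpen (A i) ∧ x ∈ A i) →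
    (∀ U : Set X, IsOpen U → x ∈ U → ∃ i, A i ⊆ U) →
    IsGLB (Set.range fun i => μ (A i)) (μ {x})

/-!
A cone of positive measure cannot contain at most `λ` *positive branches* (points all of whose
cones have positive measure): cutting every other branch at the first level where its cone is
null writes the cone as a disjoint union of at most `κ · λ^{<κ} = λ` null sets, so (M4) gives
it measure `0`. The same decomposition, with "measure `< ε`" in place of "null" and using (M5)
and continuity to make every branch reach such a level, shows `μ X ≤ c` whenever `n • ε ≤ c`
for all `n`; hence a set of measure `< μ X` contains only finitely many disjoint sets of
measure `≥ ε`. Splitting positive cones over and over then produces a sequence of positive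
values with no positive lower bound. If `cf κ > ω`, this contradicts (M5) along one positive
branch, because countably many levels are bounded. If `cf κ = ω`, each of countably many
cofinal levels carries only countably many positive cones, so a positive cone of measure
`< μ X` has at most `𝔠 ≤ λ` positive branches, contradicting the first point.
-/

open Function

theorem IsPTOM.addLeftMono {S : Type*} [AddMonoid S] [LinearOrder S] (hS : IsPTOM S) :
    AddLeftMono S :=
  ⟨fun _ _ _ h => hS.add_le_add _ _ _ _ le_rfl h⟩

theorem IsPTOM.addRightMono {S : Type*} [AddMonoid S] [LinearOrder S] (hS : IsPTOM S) :
    AddRightMono S :=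
  ⟨fun _ _ _ h => hS.add_le_add _ _ _ _ h le_rfl⟩

theorem Cardinal.le_of_powerlt_eq_self {κ lam : Cardinal} (h2 : 2 ≤ lam)
    (h : lam ^< κ = lam) : κ ≤ lam := by
  by_contra! hlt
  exact (cantor lam).not_ge
    ((power_le_power_right h2).trans ((le_powerlt lam hlt).trans h.le))

theorem Cardinal.mk_sigma_Iio_toType_le {κ lam : Cardinal} (hκ : κ ≤ lam) (hlam : ℵ₀ ≤ lam)
    (hpow : lam ^< κ = lam) : #(Σ b : κ.ord.ToType, Iio b → lam.ord.ToType) ≤ lam := by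
  rw [mk_sigma]
  calc (sum fun b : κ.ord.ToType => #(Iio b → lam.ord.ToType))
        ≤ sum fun _ : κ.ord.ToType => lam ^< κ := sum_le_sum _ _ fun b => by
          rw [← power_def, mk_ord_toType]
          refine le_powerlt _ ?_
          simpa using mk_Iio_lt b (by rw [mk_ord_toType, Ordinal.type_toType])
    _ = κ * lam := by rw [sum_const', mk_ord_toType, hpow]
    _ ≤ lam := (mul_le_mul_left hκ lam).trans (mul_eq_self hlam).le

theorem exists_ordinal_toType_equiv (I : Type) :
    ∃ γ : Ordinal.{0}, γ.card = #I ∧ Nonempty (γ.ToType ≃ I) :=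
  ⟨(#I).ord, card_ord _, Cardinal.eq.1 (mk_ord_toType _)⟩

theorem exists_seq_pairwise_disjoint {α : Type*} {P : Set α → Prop}
    (h : ∀ U, P U → ∃ V W, P V ∧ P W ∧ V ⊆ U ∧ W ⊆ U ∧ Disjoint V W) {U : Set α} (hU : P U) :
    ∃ d : ℕ → Set α, (∀ n, P (d n) ∧ d n ⊆ U) ∧ Pairwise (Disjoint on d) := by
  choose V W hV hW hVU hWU hVW using h
  let r : ℕ → {U // P U} := fun n => (fun U => ⟨W U.1 U.2, hW _ U.2⟩)^[n] ⟨U, hU⟩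
  have hr : ∀ n, r (n + 1) = ⟨W (r n).1 (r n).2, hW _ _⟩ := fun n =>
    iterate_succ_apply' _ n _
  have hanti : Antitone fun n => (r n).1 := antitone_nat_of_succ_le fun n => by
    rw [hr n]; exact hWU _ _
  have hsub : ∀ n, V (r n).1 (r n).2 ⊆ U := fun n => (hVU _ _).trans (hanti n.zero_le)
  refine ⟨fun n => V (r n).1 (r n).2, fun n => ⟨hV _ _, hsub n⟩, ?_⟩
  have hlt : ∀ m n, m < n → Disjoint (V (r m).1 (r m).2) (V (r n).1 (r n).2) := by
    intro m n hmn
    refine (hVW _ _).mono_right ((hVU _ _).trans ?_)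
    have : (r n).1 ⊆ (r (m + 1)).1 := hanti (Nat.succ_le_of_lt hmn)
    rwa [hr m] at this
  intro m n hmn
  rcases hmn.lt_or_gt with h | h
  · exact hlt m n h
  · exact (hlt n m h).symm

namespace IsWeakMeasureSpace

variable {X : Type} [TopologicalSpace X] {lam : Cardinal} {S : Type*} [AddMonoid S]
  [LinearOrder S] {M : Set (Set X)} {μ : Set X → S}

theorem iUnion_mem (hW : IsWeakMeasureSpace X lam S M μ) {I : Type} (hI : #I ≤ lam)
    {f : I → Set X} (hf : ∀ i, f i ∈ M) : ⋃ i, f i ∈ M := by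
  rw [← sUnion_range]
  exact hW.sUnion_mem _ (range_subset_iff.2 hf) (mk_range_le.trans hI)

theorem exists_isLUB_measure_iUnion (hW : IsWeakMeasureSpace X lam S M μ) {I : Type}
    (hI : #I ≤ lam) {f : I → Set X} (hf : ∀ i, f i ∈ M) (hd : Pairwise (Disjoint on f)) :
    ∃ (γ : Ordinal.{0}) (e : γ.ToType ≃ I),
      IsLUB {s | ∃ F : Finset γ.ToType, s = finSum (fun j => μ (f (e j))) F} (μ (⋃ i, f i)) := by
  obtain ⟨γ, hγ, ⟨e⟩⟩ := exists_ordinal_toType_equiv I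
  refine ⟨γ, e, ?_⟩
  rw [← e.surjective.iUnion_comp f]
  exact hW.additive γ (f ∘ e) (hγ ▸ hI) (fun j => hf _)
    fun i j hij => hd (e.injective.ne hij)

theorem measure_iUnion_le (hW : IsWeakMeasureSpace X lam S M μ) {I : Type} (hI : #I ≤ lam)
    {f : I → Set X} (hf : ∀ i, f i ∈ M) (hd : Pairwise (Disjoint on f)) {c : S}
    (hc : ∀ l : List I, (l.map (μ ∘ f)).sum ≤ c) : μ (⋃ i, f i) ≤ c := by
  obtain ⟨γ, e, h⟩ := hW.exists_isLUB_measure_iUnion hI hf hd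
  refine h.2 ?_
  rintro _ ⟨F, rfl⟩
  simpa [finSum, List.map_map, comp_def] using hc ((F.sort (· ≤ ·)).map e)

theorem card_nsmul_le_measure_iUnion (hW : IsWeakMeasureSpace X lam S M μ) (hS : IsPTOM S)
    {I : Type} (hI : #I ≤ lam) {f : I → Set X} (hf : ∀ i, f i ∈ M)
    (hd : Pairwise (Disjoint on f)) {ε : S} (hε : ∀ i, ε ≤ μ (f i)) (F : Finset I) :
    F.card • ε ≤ μ (⋃ i, f i) := by
  have := hS.addLeftMono
  have := hS.addRightMono
  obtain ⟨γ, e, h⟩ := hW.exists_isLUB_measure_iUnion hI hf hd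
  let F' := F.map e.symm.toEmbedding
  calc F.card • ε = F'.card • ε := by rw [Finset.card_map]
    _ ≤ finSum (fun j => μ (f (e j))) F' := by
        simpa [finSum] using
          List.card_nsmul_le_sum ((F'.sort (· ≤ ·)).map fun j => μ (f (e j))) ε (by simp [hε])
    _ ≤ μ (⋃ i, f i) := h.1 ⟨F', rfl⟩

theorem isGLB_measure_singleton (hW : IsWeakMeasureSpace X lam S M μ) {I : Type}
    (hI : #I ≤ lam) {x : X} (hx : {x} ∈ M) {U : I → Set X} (hU : ∀ i, IsOpen (U i) ∧ x ∈ U i)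
    (hbasis : ∀ V, IsOpen V → x ∈ V → ∃ i, U i ⊆ V) :
    IsGLB (range fun i => μ (U i)) (μ {x}) := by
  obtain ⟨γ, hγ, ⟨e⟩⟩ := exists_ordinal_toType_equiv I
  have h := hW.point_reg x γ (U ∘ e) hx (hγ ▸ hI) (fun j => hU _) fun V hV hxV => by
    obtain ⟨i, hi⟩ := hbasis V hV hxV
    exact ⟨e.symm i, by simpa using hi⟩
  rwa [← e.surjective.range_comp (fun i => μ (U i))]

theorem finite_of_forall_le_measure (hW : IsWeakMeasureSpace X lam S M μ) (hS : IsPTOM S)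
    (hlam : ℵ₀ ≤ lam) (harch : ∀ ε c : S, 0 < ε → (∀ n : ℕ, n • ε ≤ c) → μ Set.univ ≤ c)
    {B : Set X} (hB : B ∈ M) (hBlt : μ B < μ Set.univ) {𝒟 : Set (Set X)} (hM : 𝒟 ⊆ M)
    (hd : 𝒟.PairwiseDisjoint id) (hsub : ∀ D ∈ 𝒟, D ⊆ B) {ε : S} (hε : 0 < ε)
    (hle : ∀ D ∈ 𝒟, ε ≤ μ D) : 𝒟.Finite := by
  by_contra hinf
  let g := Set.Infinite.natEmbedding 𝒟 hinf
  have hℕ : #ℕ ≤ lam := mk_nat.trans_le hlam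
  have hgM : ∀ n, (g n).1 ∈ M := fun n => hM (g n).2
  have hgd : Pairwise (Disjoint on fun n => (g n).1) := fun m n hmn =>
    hd (g m).2 (g n).2 fun h => hmn (g.injective (Subtype.ext h))
  refine (harch ε (μ B) hε fun n => ?_).not_gt hBlt
  calc n • ε = (Finset.range n).card • ε := by rw [Finset.card_range]
    _ ≤ μ (⋃ k, (g k).1) :=
        hW.card_nsmul_le_measure_iUnion hS hℕ hgM hgd (fun k => hle _ (g k).2) _
    _ ≤ μ B := hW.mono _ _ (hW.iUnion_mem hℕ hgM) hB (iUnion_subset fun k => hsub _ (g k).2)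

theorem countable_of_pos_measure (hW : IsWeakMeasureSpace X lam S M μ) (hS : IsPTOM S)
    (hlam : ℵ₀ ≤ lam) (harch : ∀ ε c : S, 0 < ε → (∀ n : ℕ, n • ε ≤ c) → μ Set.univ ≤ c)
    {g : ℕ → S} (hg0 : ∀ n, 0 < g n) (hg : ∀ δ, 0 < δ → ∃ n, g n < δ)
    {B : Set X} (hB : B ∈ M) (hBlt : μ B < μ Set.univ) {𝒟 : Set (Set X)} (hM : 𝒟 ⊆ M)
    (hd : 𝒟.PairwiseDisjoint id) (hsub : ∀ D ∈ 𝒟, D ⊆ B) (hpos : ∀ D ∈ 𝒟, 0 < μ D) :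
    𝒟.Countable := by
  have hcover : 𝒟 ⊆ ⋃ n, {D ∈ 𝒟 | g n ≤ μ D} := fun D hD => by
    obtain ⟨n, hn⟩ := hg _ (hpos D hD)
    exact mem_iUnion.2 ⟨n, hD, hn.le⟩
  refine (countable_iUnion fun n => Set.Finite.countable ?_).mono hcover
  exact hW.finite_of_forall_le_measure hS hlam harch hB hBlt (sep_subset _ _ |>.trans hM)
    (hd.subset (sep_subset _ _)) (fun D hD => hsub D hD.1) (hg0 n) fun D hD => hD.2

end IsWeakMeasureSpace

namespace GSeq

variable {ι A : Type} [LinearOrder ι]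

def cone (x : GSeq ι A) (b : ι) : Set (GSeq ι A) :=
  {y | ∀ i < b, y i = x i}

theorem isOpen_cone (x : GSeq ι A) (b : ι) : IsOpen (cone x b) :=
  TopologicalSpace.isOpen_generateFrom_of_mem ⟨x, b, rfl⟩

theorem mem_cone_self (x : GSeq ι A) (b : ι) : x ∈ cone x b := fun _ _ => rfl

theorem cone_anti (x : GSeq ι A) : Antitone (cone x) :=
  fun _ _ h _ hy i hi => hy i (hi.trans_le h)

theorem cone_eq_of_mem {x y : GSeq ι A} {b : ι} (h : y ∈ cone x b) : cone y b = cone x b := by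
  ext w
  exact ⟨fun hw i hi => (hw i hi).trans (h i hi), fun hw i hi => (hw i hi).trans (h i hi).symm⟩

theorem cone_subset_cone {x y : GSeq ι A} {b b' : ι} (h : y ∈ cone x b) (hb : b ≤ b') :
    cone y b' ⊆ cone x b :=
  cone_eq_of_mem h ▸ cone_anti y hb

theorem disjoint_cone_of_ne {x y : GSeq ι A} {b b' i : ι} (hb : i < b) (hb' : i < b')
    (hne : x i ≠ y i) : Disjoint (cone x b) (cone y b') :=
  disjoint_left.2 fun _ hx hy => hne ((hx i hb).symm.trans (hy i hb'))

theorem cone_eq_or_disjoint (x y : GSeq ι A) (b : ι) :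
    cone x b = cone y b ∨ Disjoint (cone x b) (cone y b) := by
  refine or_iff_not_imp_right.2 fun h => ?_
  obtain ⟨w, hwx, hwy⟩ := not_disjoint_iff.1 h
  rw [← cone_eq_of_mem hwx, cone_eq_of_mem hwy]

theorem cone_bot [OrderBot ι] (x : GSeq ι A) : cone x ⊥ = Set.univ :=
  eq_univ_of_forall fun _ _ hi => absurd hi not_lt_bot

theorem isTopologicalBasis_cone [Nonempty ι] :
    TopologicalSpace.IsTopologicalBasis (range fun p : GSeq ι A × ι => cone p.1 p.2) where
  exists_subset_inter := by
    rintro _ ⟨⟨x, b⟩, rfl⟩ _ ⟨⟨y, b'⟩, rfl⟩ w ⟨hwx, hwy⟩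
    exact ⟨cone w (max b b'), ⟨⟨w, _⟩, rfl⟩, mem_cone_self w _,
      subset_inter (cone_subset_cone hwx (le_max_left b b'))
        (cone_subset_cone hwy (le_max_right b b'))⟩
  sUnion_eq := sUnion_eq_univ_iff.2 fun x =>
    ⟨_, ⟨⟨x, Classical.arbitrary ι⟩, rfl⟩, mem_cone_self x _⟩
  eq_generateFrom := congrArg TopologicalSpace.generateFrom <| by
    ext C
    exact ⟨fun ⟨x, b, h⟩ => ⟨⟨x, b⟩, h.symm⟩, fun ⟨⟨x, b⟩, h⟩ => ⟨x, b, h.symm⟩⟩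

theorem exists_cone_subset [Nonempty ι] {U : Set (GSeq ι A)} (hU : IsOpen U) {x : GSeq ι A}
    (hx : x ∈ U) : ∃ b, cone x b ⊆ U := by
  obtain ⟨_, ⟨⟨y, b⟩, rfl⟩, hxy, hU⟩ := isTopologicalBasis_cone.exists_subset_of_mem_open hx hU
  exact ⟨b, cone_eq_of_mem hxy ▸ hU⟩

theorem mk_range_cone_le :
    #(range fun p : GSeq ι A × ι => cone p.1 p.2) ≤ #(Σ b : ι, Iio b → A) := by
  refine (mk_le_mk_of_subset ?_).trans
    (mk_range_le (f := fun q : Σ b : ι, Iio b → A => {y : GSeq ι A | ∀ i : Iio q.1, y i = q.2 i}))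
  rintro _ ⟨⟨x, b⟩, rfl⟩
  exact ⟨⟨b, fun i => x i⟩, by ext y; exact ⟨fun h i hi => h ⟨i, hi⟩, fun h i => h i i.2⟩⟩

section FirstHit

variable {S : Type*}

def IsFirstHit (μ : Set (GSeq ι A) → S) (T : Set S) (b₀ : ι) (x : GSeq ι A) (b : ι) : Prop :=
  b₀ ≤ b ∧ μ (cone x b) ∈ T ∧ ∀ b' ∈ Ico b₀ b, μ (cone x b') ∉ T

variable {μ : Set (GSeq ι A) → S} {T : Set S} {b₀ : ι}

theorem IsFirstHit.of_mem_cone {x y : GSeq ι A} {b : ι} (h : IsFirstHit μ T b₀ x b)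
    (hy : y ∈ cone x b) : IsFirstHit μ T b₀ y b := by
  have hcone : ∀ b' ≤ b, cone y b' = cone x b' := fun b' hb' => cone_eq_of_mem (cone_anti x hb' hy)
  refine ⟨h.1, hcone b le_rfl ▸ h.2.1, fun b' hb' => ?_⟩
  rw [hcone b' hb'.2.le]
  exact h.2.2 b' hb'

theorem IsFirstHit.unique {x : GSeq ι A} {b b' : ι} (h : IsFirstHit μ T b₀ x b)
    (h' : IsFirstHit μ T b₀ x b') : b = b' :=
  le_antisymm (not_lt.1 fun hlt => h.2.2 b' ⟨h'.1, hlt⟩ h'.2.1)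
    (not_lt.1 fun hlt => h'.2.2 b ⟨h.1, hlt⟩ h.2.1)

theorem exists_isFirstHit [WellFoundedLT ι] {x : GSeq ι A}
    (h : ∃ b, b₀ ≤ b ∧ μ (cone x b) ∈ T) : ∃ b, IsFirstHit μ T b₀ x b := by
  obtain ⟨b, ⟨hb₀, hbT⟩, hmin⟩ := wellFounded_lt.has_min _ h
  exact ⟨b, hb₀, hbT, fun b' hb' hb'T => hmin b' ⟨hb'.1, hb'T⟩ hb'.2⟩

variable (μ T b₀) in
def piece (x : GSeq ι A) : Set (GSeq ι A) :=
  open Classical in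
  if h : ∃ b, IsFirstHit μ T b₀ x b then cone x h.choose else {x}

theorem mem_piece_self (x : GSeq ι A) : x ∈ piece μ T b₀ x := by
  unfold piece
  split_ifs
  exacts [mem_cone_self x _, rfl]

theorem piece_eq_of_mem {x y : GSeq ι A} (hy : y ∈ piece μ T b₀ x) :
    piece μ T b₀ y = piece μ T b₀ x := by
  unfold piece at hy ⊢
  split_ifs at hy with h
  · have hy' := h.choose_spec.of_mem_cone hy
    have hex : ∃ b, IsFirstHit μ T b₀ y b := ⟨_, hy'⟩
    rw [dif_pos hex, dif_pos h, hex.choose_spec.unique hy']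
    exact cone_eq_of_mem hy
  · rw [mem_singleton_iff.1 hy, dif_neg h]

theorem piece_subset_cone {z x : GSeq ι A} (hx : x ∈ cone z b₀) : piece μ T b₀ x ⊆ cone z b₀ := by
  unfold piece
  split_ifs with h
  exacts [cone_subset_cone hx h.choose_spec.1, singleton_subset_iff.2 hx]

theorem measure_piece_mem [Zero S] {M : Set (Set (GSeq ι A))} (hC : MeasureContinuous M μ)
    (h0 : (0 : S) ∈ T) (x : GSeq ι A) : μ (piece μ T b₀ x) ∈ T := by
  unfold piece
  split_ifs with h
  exacts [h.choose_spec.2.1, (hC x).2 ▸ h0]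

theorem piece_mem [AddMonoid S] [LinearOrder S] {lam : Cardinal} {M : Set (Set (GSeq ι A))}
    (hW : IsWeakMeasureSpace (GSeq ι A) lam S M μ) (hC : MeasureContinuous M μ) (x : GSeq ι A) :
    piece μ T b₀ x ∈ M := by
  unfold piece
  split_ifs
  exacts [hW.open_mem _ (isOpen_cone x _), (hC x).1]

theorem image_piece_subset [WellFoundedLT ι] (z : GSeq ι A) :
    piece μ T b₀ '' cone z b₀ ⊆ (range fun p : GSeq ι A × ι => cone p.1 p.2) ∪
      (fun x => {x}) '' {x ∈ cone z b₀ | ∀ b, b₀ ≤ b → μ (cone x b) ∉ T} := by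
  rintro _ ⟨x, hx, rfl⟩
  unfold piece
  split_ifs with h
  · exact Or.inl ⟨⟨x, _⟩, rfl⟩
  · refine Or.inr ⟨x, ⟨hx, fun b hb hbT => h (exists_isFirstHit ⟨b, hb, hbT⟩)⟩, rfl⟩

end FirstHit

section Measure

variable {S : Type*} [AddMonoid S] [LinearOrder S] {lam : Cardinal} {M : Set (Set (GSeq ι A))}
  {μ : Set (GSeq ι A) → S}

def posBranches (μ : Set (GSeq ι A) → S) : Set (GSeq ι A) :=
  {x | ∀ b, 0 < μ (cone x b)}

theorem measure_cone_anti (hW : IsWeakMeasureSpace (GSeq ι A) lam S M μ) (x : GSeq ι A) :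
    Antitone fun b => μ (cone x b) := fun _ _ h =>
  hW.mono _ _ (hW.open_mem _ (isOpen_cone x _)) (hW.open_mem _ (isOpen_cone x _)) (cone_anti x h)

theorem exists_measure_cone_lt [Nonempty ι] (hW : IsWeakMeasureSpace (GSeq ι A) lam S M μ)
    (hC : MeasureContinuous M μ) (hι : #ι ≤ lam) (x : GSeq ι A) {ε : S} (hε : 0 < ε) :
    ∃ b, μ (cone x b) < ε := by
  have h := hW.isGLB_measure_singleton hι (hC x).1
    (fun b => ⟨isOpen_cone x b, mem_cone_self x b⟩) fun _ hU hx => exists_cone_subset hU hx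
  rw [(hC x).2] at h
  by_contra! hge
  exact hε.not_ge (h.2 (forall_mem_range.2 hge))

/-- A cone is the disjoint union of the first-hit cones for `T` inside it and of the branches
that never hit `T`, each of these pieces having measure in `T`. -/
theorem measure_cone_le [WellFoundedLT ι] (hW : IsWeakMeasureSpace (GSeq ι A) lam S M μ)
    (hC : MeasureContinuous M μ) (hlam : ℵ₀ ≤ lam) (hpre : #(Σ b : ι, Iio b → A) ≤ lam)
    {T : Set S} (h0 : (0 : S) ∈ T) (z : GSeq ι A) (b₀ : ι)
    (hbr : #{x ∈ cone z b₀ | ∀ b, b₀ ≤ b → μ (cone x b) ∉ T} ≤ lam) {c : S}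
    (hc : ∀ l : List S, (∀ v ∈ l, v ∈ T) → l.sum ≤ c) : μ (cone z b₀) ≤ c := by
  set 𝒟 := piece μ T b₀ '' cone z b₀
  have hcover : ⋃ D : 𝒟, D.1 = cone z b₀ := by
    rw [← sUnion_eq_iUnion]
    refine subset_antisymm (sUnion_subset (forall_mem_image.2 fun x hx => piece_subset_cone hx))
      fun x hx => ⟨_, mem_image_of_mem _ hx, mem_piece_self x⟩
  have hdisj : Pairwise (Disjoint on fun D : 𝒟 => D.1) := by
    intro D D' hne
    obtain ⟨x, -, hx⟩ := D.2
    obtain ⟨y, -, hy⟩ := D'.2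
    refine not_not.1 fun h => hne (Subtype.ext ?_)
    obtain ⟨w, hwx, hwy⟩ := not_disjoint_iff.1 h
    rw [← hx, ← hy]
    exact (piece_eq_of_mem (hx.symm ▸ hwx : w ∈ piece μ T b₀ x)).symm.trans
      (piece_eq_of_mem (hy.symm ▸ hwy : w ∈ piece μ T b₀ y))
  have hcard : #𝒟 ≤ lam :=
    (mk_le_mk_of_subset (image_piece_subset z)).trans <| (mk_union_le _ _).trans <|
      (add_le_add (mk_range_cone_le.trans hpre) (mk_image_le.trans hbr)).trans (add_eq_self hlam).le
  rw [← hcover]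
  refine hW.measure_iUnion_le hcard (fun D => ?_) hdisj fun l => hc _ ?_
  · obtain ⟨x, -, hx⟩ := D.2
    exact hx ▸ piece_mem hW hC x
  · simp only [List.mem_map, comp_apply]
    rintro _ ⟨⟨_, x, -, rfl⟩, -, rfl⟩
    exact measure_piece_mem hC h0 x

theorem measure_cone_le_of_forall_nsmul_le [WellFoundedLT ι] [Nonempty ι]
    (hW : IsWeakMeasureSpace (GSeq ι A) lam S M μ) (hC : MeasureContinuous M μ) (hS : IsPTOM S)
    (hlam : ℵ₀ ≤ lam) (hι : #ι ≤ lam) (hpre : #(Σ b : ι, Iio b → A) ≤ lam) (z : GSeq ι A) (b₀ : ι)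
    {ε c : S} (hε : 0 < ε) (hc : ∀ n : ℕ, n • ε ≤ c) : μ (cone z b₀) ≤ c := by
  have := hS.addLeftMono
  have := hS.addRightMono
  have hbr : {x ∈ cone z b₀ | ∀ b, b₀ ≤ b → μ (cone x b) ∉ Iio ε} = ∅ := by
    refine eq_empty_of_forall_notMem fun x ⟨_, hx⟩ => ?_
    obtain ⟨b, hb⟩ := exists_measure_cone_lt hW hC hι x hε
    exact hx (max b b₀) (le_max_right _ _) ((measure_cone_anti hW x (le_max_left _ _)).trans_lt hb)
  refine measure_cone_le hW hC hlam hpre (mem_Iio.2 hε) z b₀ (by rw [hbr]; simp) fun l hl => ?_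
  exact (l.sum_le_card_nsmul ε fun v hv => (hl v hv).le).trans (hc _)

theorem lt_mk_cone_inter_posBranches [WellFoundedLT ι]
    (hW : IsWeakMeasureSpace (GSeq ι A) lam S M μ) (hC : MeasureContinuous M μ) (hS : IsPTOM S)
    (hlam : ℵ₀ ≤ lam) (hpre : #(Σ b : ι, Iio b → A) ≤ lam) {z : GSeq ι A} {b₀ : ι}
    (hpos : 0 < μ (cone z b₀)) : lam < #↥(cone z b₀ ∩ posBranches μ) := by
  by_contra! h
  refine hpos.not_ge (measure_cone_le hW hC hlam hpre (T := {0}) rfl z b₀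
    ((mk_le_mk_of_subset ?_).trans h) fun l hl => (List.sum_eq_zero hl).le)
  rintro x ⟨hx, hxT⟩
  refine ⟨hx, fun b => ?_⟩
  have hne : μ (cone x (max b b₀)) ≠ 0 := hxT _ (le_max_right _ _)
  exact ((hS.zero_le _).lt_of_ne hne.symm).trans_le (measure_cone_anti hW x (le_max_left _ _))

theorem exists_disjoint_cones [WellFoundedLT ι] [NoMaxOrder ι]
    (hW : IsWeakMeasureSpace (GSeq ι A) lam S M μ) (hC : MeasureContinuous M μ) (hS : IsPTOM S)
    (hlam : ℵ₀ ≤ lam) (hpre : #(Σ b : ι, Iio b → A) ≤ lam) {z : GSeq ι A} {b₀ : ι}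
    (hpos : 0 < μ (cone z b₀)) :
    ∃ x y b, cone x b ⊆ cone z b₀ ∧ cone y b ⊆ cone z b₀ ∧ Disjoint (cone x b) (cone y b) ∧
      0 < μ (cone x b) ∧ 0 < μ (cone y b) := by
  have h1 : 1 < #↥(cone z b₀ ∩ posBranches μ) :=
    (one_lt_aleph0.trans_le hlam).trans (lt_mk_cone_inter_posBranches hW hC hS hlam hpre hpos)
  obtain ⟨⟨x, hx, hxP⟩, ⟨y, hy, hyP⟩, hxy⟩ := (one_lt_iff_nontrivial.1 h1).exists_pair_ne
  obtain ⟨i, hi⟩ := ne_iff.1 fun h => hxy (Subtype.ext h)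
  obtain ⟨j, hij⟩ := exists_gt i
  have hib : i < max j b₀ := hij.trans_le (le_max_left _ _)
  exact ⟨x, y, max j b₀, cone_subset_cone hx (le_max_right _ _),
    cone_subset_cone hy (le_max_right _ _), disjoint_cone_of_ne hib hib hi, hxP _, hyP _⟩

theorem exists_pos_seq_forall_exists_lt [WellFoundedLT ι] [NoMaxOrder ι]
    (hW : IsWeakMeasureSpace (GSeq ι A) lam S M μ) (hC : MeasureContinuous M μ) (hS : IsPTOM S)
    (hlam : ℵ₀ ≤ lam) (hpre : #(Σ b : ι, Iio b → A) ≤ lam)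
    (harch : ∀ ε c : S, 0 < ε → (∀ n : ℕ, n • ε ≤ c) → μ Set.univ ≤ c) {z : GSeq ι A} {b₀ : ι}
    (hpos : 0 < μ (cone z b₀)) (hlt : μ (cone z b₀) < μ Set.univ) :
    ∃ g : ℕ → S, (∀ n, 0 < g n) ∧ ∀ δ, 0 < δ → ∃ n, g n < δ := by
  obtain ⟨d, hd, hdisj⟩ := exists_seq_pairwise_disjoint
    (P := fun U => (∃ x b, U = cone x b) ∧ 0 < μ U) (by
      rintro _ ⟨⟨z, b₀, rfl⟩, hpos⟩
      obtain ⟨x, y, b, hx, hy, hxy, hxpos, hypos⟩ := exists_disjoint_cones hW hC hS hlam hpre hpos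
      exact ⟨_, _, ⟨⟨x, b, rfl⟩, hxpos⟩, ⟨⟨y, b, rfl⟩, hypos⟩, hx, hy, hxy⟩) ⟨⟨z, b₀, rfl⟩, hpos⟩
  refine ⟨fun n => μ (d n), fun n => (hd n).1.2, fun δ hδ => ?_⟩
  by_contra! hge
  have hinj : Injective d := fun m n hmn => by
    by_contra hne
    have := hdisj hne
    rw [onFun, hmn, disjoint_self] at this
    exact (hd n).1.2.ne' (this ▸ hW.measure_empty)
  have hopen : ∀ n, IsOpen (d n) := fun n => by
    obtain ⟨⟨x, b, hxb⟩, -⟩ := (hd n).1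
    exact hxb ▸ isOpen_cone x b
  refine infinite_range_of_injective hinj (hW.finite_of_forall_le_measure hS hlam harch
    (hW.open_mem _ (isOpen_cone z b₀)) hlt (range_subset_iff.2 fun n => hW.open_mem _ (hopen n))
    (pairwiseDisjoint_range_iff.2 fun m n hmn => hdisj fun h => hmn (h ▸ rfl))
    (forall_mem_range.2 fun n => (hd n).2) hδ (forall_mem_range.2 hge))

theorem exists_pos_le_of_aleph0_lt_cof [Nonempty ι] (hcof : ℵ₀ < Order.cof ι)
    (hW : IsWeakMeasureSpace (GSeq ι A) lam S M μ) (hC : MeasureContinuous M μ)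
    (hι : #ι ≤ lam) {x : GSeq ι A} (hx : x ∈ posBranches μ) {g : ℕ → S} (hg : ∀ n, 0 < g n) :
    ∃ δ, 0 < δ ∧ ∀ n, δ ≤ g n := by
  choose b hb using fun n => exists_measure_cone_lt hW hC hι x (hg n)
  have hb' : ¬ IsCofinal (range b) := fun h =>
    ((Order.cof_le h).trans (mk_range_le.trans mk_nat.le)).not_gt hcof
  obtain ⟨b', hb'⟩ : ∃ b', ∀ n, b n < b' := by simpa [IsCofinal] using hb'
  exact ⟨μ (cone x b'), hx b', fun n => (measure_cone_anti hW x (hb' n).le).trans (hb n).le⟩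

theorem mk_cone_inter_posBranches_le_continuum [NoMaxOrder ι] (hcof : Order.cof ι ≤ ℵ₀)
    (hW : IsWeakMeasureSpace (GSeq ι A) lam S M μ) (hS : IsPTOM S) (hlam : ℵ₀ ≤ lam)
    (harch : ∀ ε c : S, 0 < ε → (∀ n : ℕ, n • ε ≤ c) → μ Set.univ ≤ c)
    {g : ℕ → S} (hg0 : ∀ n, 0 < g n) (hg : ∀ δ, 0 < δ → ∃ n, g n < δ) {z : GSeq ι A} {b₀ : ι}
    (hlt : μ (cone z b₀) < μ Set.univ) : #↥(cone z b₀ ∩ posBranches μ) ≤ 𝔠 := by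
  obtain ⟨s, hs, hscard⟩ := Order.exists_cof_eq ι
  have : Countable s := mk_le_aleph0_iff.1 (hscard ▸ hcof)
  set P := cone z b₀ ∩ posBranches μ
  let level (j : s) : ι := max j b₀
  -- branches through `P` are determined by their cones at the countably many levels `level j`
  let 𝒦 := ⋃ j : s, (fun x => cone x (level j)) '' P
  have h𝒦 : 𝒦.Countable := countable_iUnion fun j =>
    hW.countable_of_pos_measure hS hlam harch hg0 hg (hW.open_mem _ (isOpen_cone z b₀)) hlt
      (forall_mem_image.2 fun x _ => hW.open_mem _ (isOpen_cone x _))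
      (by
        rintro _ ⟨x, -, rfl⟩ _ ⟨y, -, rfl⟩ hne
        exact (cone_eq_or_disjoint x y _).resolve_left hne)
      (forall_mem_image.2 fun x hx => cone_subset_cone hx.1 (le_max_right _ _))
      (forall_mem_image.2 fun x hx => hx.2 _)
  let F : P → s → 𝒦 := fun x j => ⟨cone x (level j), mem_iUnion.2 ⟨j, x, x.2, rfl⟩⟩
  have hF : Injective F := by
    intro x y hxy
    refine Subtype.ext (funext fun i => ?_)
    obtain ⟨i', hii'⟩ := exists_gt i
    obtain ⟨j, hj, hij⟩ := hs i'
    have hcone : cone x.1 (level ⟨j, hj⟩) = cone y.1 (level ⟨j, hj⟩) :=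
      congrArg Subtype.val (congrFun hxy ⟨j, hj⟩)
    exact (hcone ▸ mem_cone_self x.1 _ : x.1 ∈ cone y.1 _) i
      (hii'.trans_le (hij.trans (le_max_left _ _)))
  calc #P ≤ #(s → 𝒦) := mk_le_of_injective hF
    _ = #𝒦 ^ #s := (power_def _ _).symm
    _ ≤ ℵ₀ ^ ℵ₀ := (power_le_power_right (mk_le_aleph0_iff.2 h𝒦.to_subtype)).trans
        (power_le_power_left aleph0_ne_zero (hscard ▸ hcof))
    _ = 𝔠 := aleph0_power_aleph0

end Measure

end GSeq

open GSeq in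
/-- if `κ` is regular, `λ` is infinite, `λ^{<κ} = λ ≥ 𝔠`, then there is no
continuous weak `λ⁺`-measure space on the generalized Baire space `ᵏλ` over any positively
totally ordered monoid. -/
theorem statement_1 (κ lam : Cardinal) (hκ : κ.IsRegular) (hlam : ℵ₀ ≤ lam)
    (hpow : lam ^< κ = lam) (hcont : Cardinal.continuum ≤ lam)
    (S : Type) [AddMonoid S] [LinearOrder S] (hS : IsPTOM S) :
    ¬ ∃ (M : Set (Set (GSeq κ.ord.ToType lam.ord.ToType)))
        (μ : Set (GSeq κ.ord.ToType lam.ord.ToType) → S),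
        IsWeakMeasureSpace (GSeq κ.ord.ToType lam.ord.ToType) lam S M μ ∧
          MeasureContinuous M μ := by
  rintro ⟨M, μ, hW, hC⟩
  have : Nonempty κ.ord.ToType :=
    Ordinal.nonempty_toType_iff.2 (mt ord_eq_zero.1 (aleph0_pos.trans_le hκ.aleph0_le).ne')
  have : Nonempty lam.ord.ToType :=
    Ordinal.nonempty_toType_iff.2 (mt ord_eq_zero.1 (aleph0_pos.trans_le hlam).ne')
  have := Cardinal.noMaxOrder hκ.aleph0_le
  let := WellFoundedLT.toOrderBot κ.ord.ToType
  have hκlam : κ ≤ lam := le_of_powerlt_eq_self ((natCast_lt_aleph0 (n := 2)).le.trans hlam) hpow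
  have hι : #κ.ord.ToType ≤ lam := (mk_ord_toType κ).trans_le hκlam
  have hpre := mk_sigma_Iio_toType_le hκlam hlam hpow
  let z : GSeq κ.ord.ToType lam.ord.ToType := fun _ => Classical.arbitrary _
  have harch : ∀ ε c : S, 0 < ε → (∀ n : ℕ, n • ε ≤ c) → μ Set.univ ≤ c := fun ε c hε hc =>
    cone_bot z ▸ measure_cone_le_of_forall_nsmul_le hW hC hS hlam hι hpre z ⊥ hε hc
  obtain ⟨⟨x, -, hx⟩⟩ : Nonempty ↥(cone z ⊥ ∩ posBranches μ) := mk_ne_zero_iff.1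
    ((lt_mk_cone_inter_posBranches hW hC hS hlam hpre (cone_bot z ▸ hW.measure_univ_pos)).ne_bot)
  obtain ⟨b, hb⟩ := exists_measure_cone_lt hW hC hι x hW.measure_univ_pos
  obtain ⟨g, hg0, hg⟩ := exists_pos_seq_forall_exists_lt hW hC hS hlam hpre harch (hx b) hb
  rcases le_or_gt (Order.cof κ.ord.ToType) ℵ₀ with hcof | hcof
  · exact ((mk_cone_inter_posBranches_le_continuum hcof hW hS hlam harch hg0 hg hb).trans
      hcont).not_gt (lt_mk_cone_inter_posBranches hW hC hS hlam hpre (hx b))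
  · obtain ⟨δ, hδ, hle⟩ := exists_pos_le_of_aleph0_lt_cof hcof hW hC hι hx hg0
    obtain ⟨n, hn⟩ := hg δ hδ
    exact (hle n).not_gt hn
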